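/- There exists a top-down tree automaton A = (Σ, Q, δ, I) for which P(<up(<dwincl), <dw) is not good for pruning, i.e., L(Prune(A, P(<up(<dwincl), <dw))) ≠ L(A), where <dwincl = ⊆dw ∖ (⊆dw)⁻¹ is the strict version of downward trace inclusion, ≼up(<dwincl) is the maximal upward simulation induced by <dwincl, <up(<dwincl) = ≼up(<dwincl) ∖ (≼up(<dwincl))⁻¹, and <dw = ≼dw ∖ (≼dw)⁻¹ is the strict version of the maximal downward simulation; here P relates rules ⟨p,σ,r₁⋯rₙ⟩ and ⟨p′,σ,r′₁⋯r′ₙ⟩ iff p <up(<dwincl) p′, rᵢ ≼dw r′ᵢ for all i, and rᵢ <dw r′ᵢ for some i. (A witness is the automaton of Figure 1(d) of the paper, over Σ₀ = {c,d}, Σ₁ = {b}, Σ₂ = {a}, which loses the tree a(a(c,c),a(c,c)) after pruning.) -/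

import Mathlib

/-- A tree over a ranked alphabet: a partial map from nodes (lists of child
indices) to symbols, with finite, prefix-closed domain respecting ranks. -/
structure RTree (α : Type) (rank : α → ℕ) where
  label : List ℕ → Option α
  finite : Set.Finite {v : List ℕ | label v ≠ none}
  prefixClosed : ∀ v i, label (v ++ [i]) ≠ none → ∃ a, label v = some a ∧ i < rank a

namespace RTree

variable {α : Type} {rank : α → ℕ}

/-- A tree is closed if every node has all the children prescribed by the rank
of its symbol. -/
def IsClosed (t : RTree α rank) : Prop :=
  ∀ v a, t.label v = some a → ∀ i, i < rank a → t.label (v ++ [i]) ≠ none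

/-- The domain of a run on `t`: the nodes of `t` together with all (possibly
dangling) children of nodes of `t`. -/
def inRunDom (t : RTree α rank) (v : List ℕ) : Prop :=
  t.label v ≠ none ∨ ∃ v' i a, v = v' ++ [i] ∧ t.label v' = some a ∧ i < rank a

/-- A leaf of `t`: a node of `t` with no children in `t`. -/
def IsLeaf (t : RTree α rank) (v : List ℕ) : Prop :=
  t.label v ≠ none ∧ ∀ i, t.label (v ++ [i]) = none

end RTree

/-- A (nondeterministic, top-down) tree automaton, with a distinguished final
state `top`; leaf rules have right-hand side `[top]`, and rules for symbols of
positive rank have right-hand side of length equal to the rank. -/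
structure TDTA (Q α : Type) (rank : α → ℕ) where
  top : Q
  init : Set Q
  delta : Set (Q × α × List Q)
  rank_ok : ∀ τ ∈ delta, (rank τ.2.1 = 0 → τ.2.2 = [top]) ∧
    (0 < rank τ.2.1 → τ.2.2.length = rank τ.2.1)

namespace TDTA

variable {Q α : Type} {rank : α → ℕ}

/-- The right-hand side that a run `π` must match at node `v` labelled `a`. -/
def rhsOf (A : TDTA Q α rank) (a : α) (π : List ℕ → Q) (v : List ℕ) : List Q :=
  if rank a = 0 then [A.top] else (List.range (rank a)).map fun i => π (v ++ [i])

/-- `π` is a run of `A` on the tree `t`. -/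
def IsRun (A : TDTA Q α rank) (t : RTree α rank) (π : List ℕ → Q) : Prop :=
  ∀ v a, t.label v = some a → (π v, a, A.rhsOf a π v) ∈ A.delta

/-- The downward language of a state: closed trees accepted from it. -/
def dlang (A : TDTA Q α rank) (q : Q) : Set (RTree α rank) :=
  {t | t.IsClosed ∧ ∃ π, A.IsRun t π ∧ π [] = q}

/-- The language of the automaton. -/
def lang (A : TDTA Q α rank) : Set (RTree α rank) :=
  {t | ∃ q ∈ A.init, t ∈ A.dlang q}

/-- Pruning: keep exactly the transitions that are maximal w.r.t. `P`. -/
def prune (A : TDTA Q α rank) (P : Q × α × List Q → Q × α × List Q → Prop) :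
    TDTA Q α rank where
  top := A.top
  init := A.init
  delta := {τ | τ ∈ A.delta ∧ ¬∃ τ' ∈ A.delta, P τ τ'}
  rank_ok := fun τ hτ => A.rank_ok τ hτ.1

/-- Downward trace inclusion `q ⊆dw r`. -/
def dwIncl (A : TDTA Q α rank) (q r : Q) : Prop :=
  ∀ t : RTree α rank, t.IsClosed → ∀ π, A.IsRun t π → π [] = q →
    ∃ π', A.IsRun t π' ∧ π' [] = r

/-- Upward trace inclusion `q ⊆up(R) r` induced by a relation `R`. -/
def upIncl (A : TDTA Q α rank) (R : Q → Q → Prop) (q r : Q) : Prop :=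
  (q = A.top → r = A.top) ∧
  ∀ (t : RTree α rank) (v : List ℕ), t.IsLeaf v →
    ∀ πq, A.IsRun t πq → πq v = q →
      ∃ πr, A.IsRun t πr ∧ πr v = r ∧
        (∀ v', v' <+: v → πq v' ∈ A.init → πr v' ∈ A.init) ∧
        ∀ v' x, v' <+: v → v' ≠ v → t.inRunDom (v' ++ [x]) → ¬(v' ++ [x]) <+: v →
          R (πq (v' ++ [x])) (πr (v' ++ [x]))

/-- `D` is a downward simulation on `A`. -/
def IsDwSim (A : TDTA Q α rank) (D : Q → Q → Prop) : Prop :=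
  ∀ q r, D q r → (q = A.top → r = A.top) ∧
    ∀ a qs, (q, a, qs) ∈ A.delta →
      ∃ rs, (r, a, rs) ∈ A.delta ∧ List.Forall₂ D qs rs

/-- The maximal downward simulation `≼dw` (the union of all downward
simulations). -/
def dwSim (A : TDTA Q α rank) (q r : Q) : Prop :=
  ∃ D, A.IsDwSim D ∧ D q r

/-- `U` is an upward simulation on `A` induced by `R`. -/
def IsUpSim (A : TDTA Q α rank) (R U : Q → Q → Prop) : Prop :=
  ∀ q r, U q r → (q = A.top → r = A.top) ∧ (q ∈ A.init → r ∈ A.init) ∧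
    ∀ q' a qs, (q', a, qs) ∈ A.delta → ∀ i : Fin qs.length, qs.get i = q →
      ∃ r' rs, ∃ hlen : rs.length = qs.length, (r', a, rs) ∈ A.delta ∧
        rs.get (Fin.cast hlen.symm i) = r ∧ U q' r' ∧
        ∀ j : Fin qs.length, j ≠ i → R (qs.get j) (rs.get (Fin.cast hlen.symm j))

/-- The maximal upward simulation `≼up(R)` induced by `R`. -/
def upSim (A : TDTA Q α rank) (R : Q → Q → Prop) (q r : Q) : Prop :=
  ∃ U, A.IsUpSim R U ∧ U q r

/-- `W` is a downup-relation on `A`. -/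
def IsDownUp (A : TDTA Q α rank) (W : Q → Q → Prop) : Prop :=
  ∀ p q, W p q → ∀ (t : RTree α rank) (π : List ℕ → Q), A.IsRun t π → π [] = p →
    ∃ π', A.IsRun t π' ∧ π' [] = q ∧ ∀ v, t.inRunDom v → A.upSim W (π v) (π' v)

end TDTA

/-- The strict version `S ∖ S⁻¹` of a relation `S`. -/
def strictOf {Q : Type} (S : Q → Q → Prop) (q r : Q) : Prop := S q r ∧ ¬S r q

/-- Lifting of relations to tuples: pointwise `Dw` everywhere and `Ds` at some
position. -/
def liftStrict {Q : Type} (Dw Ds : Q → Q → Prop) (qs rs : List Q) : Prop :=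
  List.Forall₂ Dw qs rs ∧
    ∃ (i : ℕ) (h : i < qs.length) (h' : i < rs.length), Ds (qs.get ⟨i, h⟩) (rs.get ⟨i, h'⟩)

/-- The pruning relation `P(U, Dl)` comparing transitions with the same symbol:
sources by `U`, target tuples by `Dl`. -/
def pruneRel {Q α : Type} (U : Q → Q → Prop) (Dl : List Q → List Q → Prop) :
    Q × α × List Q → Q × α × List Q → Prop :=
  fun τ τ' => U τ.1 τ'.1 ∧ τ.2.1 = τ'.2.1 ∧ Dl τ.2.2 τ'.2.2

/-! In the automaton of Figure 1(d), the rule `q2 -a-> (qc, qcd)` dominates every `a`-rule of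
`q1` and `q3`. Indeed `qcd` strictly downward simulates `qc` and `qd`, and `q2` strictly upward
simulates `q1` and `q3` relative to strict downward trace inclusion: in the root rules
`q0 -a-> (q1, q1)`, `(q2, q3)`, `(q3, q2)`, the state `q2` can take the place of `q1` or `q3` while
the sibling becomes `q3`, whose extra rule `q3 -b-> qc` makes its language strictly larger than
those of `q1` and `q2`. After pruning, `q1` and `q3` read no `a` at all, yet every root rule sends
a child to one of them, so the tree `a(a(c,c), a(c,c))` is lost. -/

namespace List

variable {α β : Type*} [BEq α] [LawfulBEq α]

theorem mem_of_lookup_eq_some {l : List (α × β)} {a : α} {b : β} (h : l.lookup a = some b) :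
    (a, b) ∈ l := by
  induction l with
  | nil => simp at h
  | cons p l ih =>
    obtain ⟨k, c⟩ := p
    rw [lookup_cons] at h
    split at h <;> simp_all

theorem lookup_ne_none_iff {l : List (α × β)} {a : α} :
    l.lookup a ≠ none ↔ a ∈ l.map Prod.fst := by
  induction l with
  | nil => simp
  | cons p l ih =>
    obtain ⟨k, c⟩ := p
    rw [lookup_cons]
    split <;> simp_all

end List

namespace RTree

variable {α : Type} {rank : α → ℕ}

def ofList [DecidableEq α] (l : List (List ℕ × α))
    (hl : ∀ p ∈ l, p.1 = [] ∨ ∃ a ∈ l.lookup p.1.dropLast, p.1.getLastD 0 < rank a) :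
    RTree α rank where
  label v := l.lookup v
  finite := (l.map Prod.fst).finite_toSet.subset fun _ => List.lookup_ne_none_iff.mp
  prefixClosed v i h := by
    obtain ⟨b, hb⟩ := Option.ne_none_iff_exists'.mp h
    rcases hl _ (List.mem_of_lookup_eq_some hb) with hnil | ⟨a, ha, hi⟩
    · simp at hnil
    · rw [List.dropLast_concat] at ha
      rw [List.getLastD_concat] at hi
      exact ⟨a, ha, hi⟩

theorem isClosed_ofList [DecidableEq α] {l : List (List ℕ × α)} {hl}
    (h : ∀ p ∈ l, ∀ i < rank p.2, p.1 ++ [i] ∈ l.map Prod.fst) :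
    (ofList (rank := rank) l hl).IsClosed :=
  fun _ _ hv i hi => List.lookup_ne_none_iff.mpr (h _ (List.mem_of_lookup_eq_some hv) i hi)

end RTree

namespace TDTA

variable {Q α : Type} {rank : α → ℕ} (A : TDTA Q α rank)

theorem rhsOf_of_rank_eq_zero {a : α} (h : rank a = 0) (π : List ℕ → Q) (v : List ℕ) :
    A.rhsOf a π v = [A.top] := by
  simp [rhsOf, h]

theorem rhsOf_congr {a : α} {π π' : List ℕ → Q} {v : List ℕ}
    (h : ∀ i, π (v ++ [i]) = π' (v ++ [i])) : A.rhsOf a π v = A.rhsOf a π' v := by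
  unfold rhsOf
  split
  · rfl
  · exact List.map_congr_left fun i _ => h i

variable {A}

theorem IsRun.of_eqOn_compl {t : RTree α rank} {π π' : List ℕ → Q} {S : Set (List ℕ)}
    (hπ : A.IsRun t π) (heq : Set.EqOn π' π Sᶜ)
    (hS : ∀ v x, t.label v = some x → (v ∈ S ∨ ∃ i, v ++ [i] ∈ S) →
      (π' v, x, A.rhsOf x π' v) ∈ A.delta) :
    A.IsRun t π' := by
  intro v x hx
  by_cases hv : v ∈ S ∨ ∃ i, v ++ [i] ∈ S
  · exact hS v x hx hv
  · push Not at hv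
    rw [heq hv.1, A.rhsOf_congr fun i => heq (hv.2 i)]
    exact hπ v x hx

theorem IsRun.update_root {t : RTree α rank} {π : List ℕ → Q} {r : Q} (hπ : A.IsRun t π)
    (h : ∀ x, t.label [] = some x → (r, x, A.rhsOf x π []) ∈ A.delta) :
    A.IsRun t (Function.update π [] r) := by
  refine hπ.of_eqOn_compl (S := {[]}) (fun v hv => Function.update_of_ne hv _ _) ?_
  rintro v x hx (rfl | ⟨i, hi⟩)
  · rw [Function.update_self,
      A.rhsOf_congr fun i => Function.update_of_ne (List.concat_ne_nil i []) _ _]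
    exact h x hx
  · exact absurd hi (List.concat_ne_nil i v)

theorem isRun_ofList [DecidableEq α] {l : List (List ℕ × α)} {hl} {π : List ℕ → Q}
    (h : ∀ p ∈ l, (π p.1, p.2, A.rhsOf p.2 π p.1) ∈ A.delta) :
    A.IsRun (RTree.ofList l hl) π :=
  fun _ _ hx => h _ (List.mem_of_lookup_eq_some hx)

theorem dlang_subset_of_dwIncl {q r : Q} (h : A.dwIncl q r) : A.dlang q ⊆ A.dlang r :=
  fun t ⟨ht, π, hπ, hroot⟩ => ⟨ht, h t ht π hπ hroot⟩

theorem not_mem_dlang_of_label_root {t : RTree α rank} {x : α} {r : Q}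
    (ht : t.label [] = some x) (hr : ∀ rs, (r, x, rs) ∉ A.delta) : t ∉ A.dlang r := by
  rintro ⟨-, π, hπ, rfl⟩
  exact hr _ (hπ [] x ht)

theorem dwIncl_of_rules_subset {q r : Q}
    (h : ∀ x qs, (q, x, qs) ∈ A.delta → (r, x, qs) ∈ A.delta) : A.dwIncl q r := by
  rintro t - π hπ rfl
  exact ⟨_, hπ.update_root fun x hx => h _ _ (hπ [] x hx), Function.update_self _ _ _⟩

theorem dwSim_refl (q : Q) : A.dwSim q q :=
  ⟨(· = ·), by
    rintro q r rfl
    exact ⟨id, fun _ qs hqs => ⟨qs, hqs, List.forall₂_refl qs⟩⟩, rfl⟩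

theorem dwSim_of_rules_subset {q r : Q} (htop : q = A.top → r = A.top)
    (h : ∀ x qs, (q, x, qs) ∈ A.delta → (r, x, qs) ∈ A.delta) : A.dwSim q r := by
  refine ⟨fun q' r' => q' = r' ∨ q' = q ∧ r' = r, ?_, Or.inr ⟨rfl, rfl⟩⟩
  rintro q' r' (rfl | ⟨rfl, rfl⟩)
  · exact ⟨id, fun _ qs hqs => ⟨qs, hqs, List.forall₂_same.mpr fun _ _ => Or.inl rfl⟩⟩
  · exact ⟨htop, fun _ qs hqs => ⟨qs, h _ _ hqs, List.forall₂_same.mpr fun _ _ => Or.inl rfl⟩⟩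

theorem not_dwSim_of_rule {q r : Q} {x : α} {qs : List Q} (hq : (q, x, qs) ∈ A.delta)
    (hr : ∀ rs, (r, x, rs) ∉ A.delta) : ¬A.dwSim q r := by
  rintro ⟨D, hD, hqr⟩
  obtain ⟨rs, hrs, -⟩ := (hD q r hqr).2 x qs hq
  exact hr rs hrs

theorem rhsOf_prune (P : Q × α × List Q → Q × α × List Q → Prop) :
    (A.prune P).rhsOf = A.rhsOf :=
  rfl

theorem prune_delta_subset (P : Q × α × List Q → Q × α × List Q → Prop) :
    (A.prune P).delta ⊆ A.delta :=
  fun _ hτ => hτ.1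

theorem not_mem_prune_delta {P : Q × α × List Q → Q × α × List Q → Prop}
    {τ τ' : Q × α × List Q} (hτ' : τ' ∈ A.delta) (h : P τ τ') : τ ∉ (A.prune P).delta :=
  fun hτ => hτ.2 ⟨τ', hτ', h⟩

end TDTA

theorem liftStrict_cons {Q : Type} {Dw Ds : Q → Q → Prop} {q r : Q} {qs rs : List Q}
    (h : Dw q r) (hs : liftStrict Dw Ds qs rs) : liftStrict Dw Ds (q :: qs) (r :: rs) := by
  obtain ⟨hw, i, hi, hi', hsi⟩ := hs
  exact ⟨.cons h hw, i + 1, Nat.succ_lt_succ hi, Nat.succ_lt_succ hi', hsi⟩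

theorem liftStrict_singleton {Q : Type} {Dw Ds : Q → Q → Prop} {q r : Q} (hw : Dw q r)
    (hs : Ds q r) : liftStrict Dw Ds [q] [r] :=
  ⟨.cons hw .nil, 0, Nat.zero_lt_one, Nat.zero_lt_one, hs⟩

namespace PruningCounterexample

inductive State | top | q0 | q1 | q2 | q3 | qc | qd | qcd
  deriving DecidableEq

inductive Letter | a | b | c | d
  deriving DecidableEq

open State Letter

instance : Fintype State where
  elems := {top, q0, q1, q2, q3, qc, qd, qcd}
  complete q := by cases q <;> decide

instance : Fintype Letter where
  elems := {a, b, c, d}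
  complete x := by cases x <;> decide

def rank : Letter → ℕ
  | a => 2
  | b => 1
  | c | d => 0

abbrev Rule := State × Letter × List State

def rules : List Rule :=
  [(q0, a, [q1, q1]), (q0, a, [q2, q3]), (q0, a, [q3, q2]),
   (q1, a, [qc, qc]), (q3, a, [qc, qc]), (q3, a, [qc, qd]), (q2, a, [qc, qcd]),
   (q3, b, [qc]),
   (qc, c, [top]), (qd, d, [top]), (qcd, c, [top]), (qcd, d, [top])]

def A : TDTA State Letter rank where
  top := top
  init := {q0}
  delta := {τ | τ ∈ rules}
  rank_ok := by
    intro τ (hτ : τ ∈ rules)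
    revert τ
    decide

instance : DecidablePred (· ∈ A.delta) := fun τ => inferInstanceAs (Decidable (τ ∈ rules))

theorem rules_subset_of_forall_mem {q r : State} (h : ∀ τ ∈ rules, τ.1 = q → (r, τ.2) ∈ rules) :
    ∀ x qs, (q, x, qs) ∈ A.delta → (r, x, qs) ∈ A.delta :=
  fun _ _ hτ => h _ hτ rfl

theorem not_mem_delta_of_forall_mem {r : State} {x : Letter}
    (h : ∀ τ ∈ rules, τ.1 = r → τ.2.1 ≠ x) : ∀ rs, (r, x, rs) ∉ A.delta :=
  fun _ hτ => h _ hτ rfl rfl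

theorem rhsOf_a (π : List ℕ → State) (v : List ℕ) :
    A.rhsOf a π v = [π (v ++ [0]), π (v ++ [1])] := by
  simp [TDTA.rhsOf, rank, List.range_succ]

theorem strictDwSim_qc_qcd : strictOf A.dwSim qc qcd :=
  ⟨A.dwSim_of_rules_subset nofun (rules_subset_of_forall_mem (by decide)),
    A.not_dwSim_of_rule (x := d) (qs := [top]) (by decide)
      (not_mem_delta_of_forall_mem (by decide))⟩

theorem strictDwSim_qd_qcd : strictOf A.dwSim qd qcd :=
  ⟨A.dwSim_of_rules_subset nofun (rules_subset_of_forall_mem (by decide)),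
    A.not_dwSim_of_rule (x := c) (qs := [top]) (by decide)
      (not_mem_delta_of_forall_mem (by decide))⟩

def treeBC : RTree Letter rank := .ofList [([], b), ([0], c)] (by decide)

theorem treeBC_mem_dlang_q3 : treeBC ∈ A.dlang q3 :=
  ⟨RTree.isClosed_ofList (by decide), fun v => [q3, qc].getD v.length top,
    A.isRun_ofList (by decide), rfl⟩

theorem not_dwIncl_q3 {r : State} (hr : ∀ τ ∈ rules, τ.1 = r → τ.2.1 ≠ b) : ¬A.dwIncl q3 r :=
  fun h => A.not_mem_dlang_of_label_root rfl (not_mem_delta_of_forall_mem hr)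
    (A.dlang_subset_of_dwIncl h treeBC_mem_dlang_q3)

theorem strictDwIncl_q1_q3 : strictOf A.dwIncl q1 q3 :=
  ⟨A.dwIncl_of_rules_subset (rules_subset_of_forall_mem (by decide)),
    not_dwIncl_q3 (by decide)⟩

theorem dwIncl_q2_q3 : A.dwIncl q2 q3 := by
  intro t ht π hπ hq2
  cases hroot : t.label [] with
  | none => exact ⟨_, hπ.update_root (by simp [hroot]), Function.update_self _ _ _⟩
  | some x =>
    have hrule : ∀ τ ∈ rules, τ.1 = q2 → τ = (q2, a, [qc, qcd]) := by decide
    have hroot_rule := hrule _ (hπ [] x hroot) hq2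
    simp only [Prod.mk.injEq] at hroot_rule
    obtain ⟨-, rfl, hrhs⟩ := hroot_rule
    obtain ⟨hπ0, hπ1⟩ : π [0] = qc ∧ π [1] = qcd := by simpa [rhsOf_a] using hrhs
    have hlabel1 : t.label [1] ≠ none := ht [] a hroot 1 (by decide)
    obtain ⟨y, hy⟩ := Option.ne_none_iff_exists'.mp hlabel1
    have hleaf : ∀ τ ∈ rules, τ.1 = qcd → τ.2.1 = c ∨ τ.2.1 = d := by decide
    obtain ⟨s, hy0, hs_leaf, hs_root⟩ :
        ∃ s, rank y = 0 ∧ (s, y, [top]) ∈ A.delta ∧ (q3, a, [qc, s]) ∈ A.delta := by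
      rcases hleaf _ (hπ [1] y hy) (by simp [hπ1]) with rfl | rfl
      exacts [⟨qc, rfl, by decide, by decide⟩, ⟨qd, rfl, by decide, by decide⟩]
    refine ⟨fun v => if v = [] then q3 else if v = [1] then s else π v,
      hπ.of_eqOn_compl (S := {[], [1]}) (fun v hv => by simp_all) ?_, rfl⟩
    rintro v x hx hv
    obtain rfl | rfl : v = [] ∨ v = [1] := by
      rcases hv with hv | ⟨i, hi⟩
      · simpa using hv
      · left
        cases v <;> simp_all
    · rw [hroot] at hx
      cases hx
      simpa [rhsOf_a, hπ0] using hs_root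
    · rw [hy] at hx
      cases hx
      simp only [A.rhsOf_of_rank_eq_zero hy0, List.cons_ne_nil, ↓reduceIte]
      exact hs_leaf

theorem strictDwIncl_q2_q3 : strictOf A.dwIncl q2 q3 :=
  ⟨dwIncl_q2_q3, not_dwIncl_q3 (by decide)⟩

theorem q0_not_mem_rhs : ∀ τ ∈ rules, q0 ∉ τ.2.2 := by decide

theorem rule_of_q1_mem_rhs : ∀ τ ∈ rules, q1 ∈ τ.2.2 → τ = (q0, a, [q1, q1]) := by decide

theorem rule_of_q3_mem_rhs :
    ∀ τ ∈ rules, q3 ∈ τ.2.2 → τ = (q0, a, [q2, q3]) ∨ τ = (q0, a, [q3, q2]) := by decide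

def upWitness (q r : State) : Prop := q = q0 ∧ r = q0 ∨ (q = q1 ∨ q = q3) ∧ r = q2

theorem isUpSim_upWitness : A.IsUpSim (strictOf A.dwIncl) upWitness := by
  rintro q r (⟨rfl, rfl⟩ | ⟨hq, rfl⟩)
  · exact ⟨id, id, fun _ _ qs hτ i hi => (q0_not_mem_rhs _ hτ (hi ▸ List.get_mem qs i)).elim⟩
  refine ⟨?_, ?_, fun q' x qs hτ i hi => ?_⟩
  · rcases hq with rfl | rfl <;> rintro ⟨⟩
  · rcases hq with rfl | rfl <;> rintro ⟨⟩
  have hmem : q ∈ qs := hi ▸ List.get_mem qs i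
  rcases hq with rfl | rfl
  · have := rule_of_q1_mem_rhs _ hτ hmem
    simp only [Prod.mk.injEq] at this
    obtain ⟨rfl, rfl, rfl⟩ := this
    fin_cases i
    · refine ⟨q0, [q2, q3], rfl, by decide, rfl, .inl ⟨rfl, rfl⟩, fun j hj => ?_⟩
      fin_cases j
      exacts [absurd rfl hj, strictDwIncl_q1_q3]
    · refine ⟨q0, [q3, q2], rfl, by decide, rfl, .inl ⟨rfl, rfl⟩, fun j hj => ?_⟩
      fin_cases j
      exacts [strictDwIncl_q1_q3, absurd rfl hj]
  · have := rule_of_q3_mem_rhs _ hτ hmem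
    simp only [Prod.mk.injEq] at this
    rcases this with ⟨rfl, rfl, rfl⟩ | ⟨rfl, rfl, rfl⟩ <;> fin_cases i <;> try cases hi
    · refine ⟨q0, [q3, q2], rfl, by decide, rfl, .inl ⟨rfl, rfl⟩, fun j hj => ?_⟩
      fin_cases j
      exacts [strictDwIncl_q2_q3, absurd rfl hj]
    · refine ⟨q0, [q2, q3], rfl, by decide, rfl, .inl ⟨rfl, rfl⟩, fun j hj => ?_⟩
      fin_cases j
      exacts [absurd rfl hj, strictDwIncl_q2_q3]

theorem not_upSim_q2 {r : State} (hr : r = q1 ∨ r = q3) :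
    ¬A.upSim (strictOf A.dwIncl) q2 r := by
  rintro ⟨U, hU, hq2r⟩
  obtain ⟨r', rs, hlen, hτ, hget, -, hsib⟩ :=
    (hU _ _ hq2r).2.2 q0 a [q2, q3] (by decide) ⟨0, by decide⟩ rfl
  have hmem : r ∈ rs := hget ▸ List.get_mem rs _
  rcases hr with rfl | rfl
  · have := rule_of_q1_mem_rhs _ hτ hmem
    simp only [Prod.mk.injEq] at this
    obtain ⟨-, -, rfl⟩ := this
    exact not_dwIncl_q3 (r := q1) (by decide) (hsib ⟨1, by decide⟩ (by decide)).1
  · have := rule_of_q3_mem_rhs _ hτ hmem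
    simp only [Prod.mk.injEq] at this
    rcases this with ⟨-, -, rfl⟩ | ⟨-, -, rfl⟩
    · cases hget
    · exact not_dwIncl_q3 (r := q2) (by decide) (hsib ⟨1, by decide⟩ (by decide)).1

theorem strictUpSim_q2 {q : State} (hq : q = q1 ∨ q = q3) :
    strictOf (A.upSim (strictOf A.dwIncl)) q q2 :=
  ⟨⟨upWitness, isUpSim_upWitness, .inr ⟨hq, rfl⟩⟩, not_upSim_q2 hq⟩

def P : Rule → Rule → Prop :=
  pruneRel (strictOf (A.upSim (strictOf A.dwIncl))) (liftStrict A.dwSim (strictOf A.dwSim))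

theorem P_q2 {q s : State} (hq : q = q1 ∨ q = q3) (hs : strictOf A.dwSim s qcd) :
    P (q, a, [qc, s]) (q2, a, [qc, qcd]) :=
  ⟨strictUpSim_q2 hq, rfl, liftStrict_cons (A.dwSim_refl qc) (liftStrict_singleton hs.1 hs)⟩

theorem no_a_rule_after_pruning {q : State} (hq : q = q1 ∨ q = q3) (qs : List State) :
    (q, a, qs) ∉ (A.prune P).delta := by
  intro hτ
  have hrhs : ∀ τ ∈ rules, (τ.1 = q1 ∨ τ.1 = q3) → τ.2.1 = a →
      τ.2.2 = [qc, qc] ∨ τ.2.2 = [qc, qd] := by decide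
  rcases hrhs _ (A.prune_delta_subset P hτ) hq rfl with rfl | rfl
  · exact A.not_mem_prune_delta (by decide) (P_q2 hq strictDwSim_qc_qcd) hτ
  · exact A.not_mem_prune_delta (by decide) (P_q2 hq strictDwSim_qd_qcd) hτ

def treeAACC : RTree Letter rank :=
  .ofList [([], a), ([0], a), ([1], a), ([0, 0], c), ([0, 1], c), ([1, 0], c), ([1, 1], c)]
    (by decide)

theorem treeAACC_mem_lang : treeAACC ∈ A.lang :=
  ⟨q0, rfl, RTree.isClosed_ofList (by decide), fun v => [q0, q1, qc].getD v.length top,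
    A.isRun_ofList (by decide), rfl⟩

theorem treeAACC_not_mem_lang_prune : treeAACC ∉ (A.prune P).lang := by
  rintro ⟨q, hq0, -, π, hπ, rfl⟩
  have hroot := A.prune_delta_subset P (hπ [] a rfl)
  rw [A.rhsOf_prune, rhsOf_a, show π [] = q0 from hq0] at hroot
  have hchild : ∀ τ ∈ rules, τ.1 = q0 → ∃ q ∈ τ.2.2, q = q1 ∨ q = q3 := by decide
  obtain ⟨q, hmem, hq⟩ := hchild _ hroot rfl
  simp only [List.nil_append, List.mem_cons, List.not_mem_nil, or_false] at hmem
  rcases hmem with rfl | rfl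
  · exact no_a_rule_after_pruning hq _ (hπ [0] a rfl)
  · exact no_a_rule_after_pruning hq _ (hπ [1] a rfl)

end PruningCounterexample

/-- There is a tree automaton for which `P(<up(<dwincl), <dw)` is not good for
pruning. -/
theorem statement_15 : ∃ (Q α : Type) (_ : Fintype Q) (_ : Fintype α)
    (rank : α → ℕ) (A : TDTA Q α rank),
    (A.prune (pruneRel (strictOf (A.upSim (strictOf A.dwIncl)))
      (liftStrict A.dwSim (strictOf A.dwSim)))).lang ≠ A.lang := by
  open PruningCounterexample in
  exact ⟨State, Letter, inferInstance, inferInstance, rank, A, fun h =>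
    treeAACC_not_mem_lang_prune (h ▸ treeAACC_mem_lang)⟩
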